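/- Fredholm's criterion: Let M be a nonempty open subset of ℂ^N, let B and C be complex Banach spaces, let μ : M → (B →L[ℂ] C) be analytic, and fix s₀ ∈ M. Suppose B = B₁ ⊕ B₂ is a topological direct sum of two closed subspaces, with continuous linear projections p₁ : B → B₁ and p₂ : B → B₂. Assume: (a) the restriction of μ(s₀) to B₁ is left-invertible modulo compact operators, i.e. there exist a continuous linear operator D : C → B₁ and a compact continuous linear operator K : B₁ → B₁ such that D(μ(s₀) v) = v − K v for all v ∈ B₁; and (b) the family of sets p₂(ker μ(s)) is locally of finite type at s₀, i.e. there exist an open neighborhood W₀ of s₀, an integer m ≥ 0 and analytic maps f_1, …, f_m : W₀ → B₂ with p₂(ker μ(s)) ⊆ span_ℂ{f_1(s), …, f_m(s)} for all s ∈ W₀. Then ker μ(s) is locally of finite type at s₀: there exist an open neighborhood W ⊆ M of s₀, an integer k ≥ 0 and analytic maps e_1, …, e_k : W → B such that ker μ(s) ⊆ span_ℂ{e_1(s), …, e_k(s)} for all s ∈ W. -/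

import Mathlib

/-!
Put `A s = D ∘ μ s ∘ ι : B₁ → B₁`, so that `A s₀ = 1 - K`. By Riesz theory the kernel of `1 - K`
is finite-dimensional and, via the Fredholm alternative, so is its cokernel; hence
`v ↦ (A s₀ v, π v)`, with `π` a projection onto `ker (1 - K)`, has a continuous left inverse.
Left invertibility persists near `s₀` with a left inverse `R s` analytic in `s`. For
`x ∈ ker μ s`, the component `v = p₁ x` satisfies `A s v = -D (μ s (p₂ x))` with `p₂ x` in the span
of the `f j s`, and applying `R s` puts `v`, hence `x`, in the span of finitely many analytic
vectors.
-/

open Filter Topology Set Function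

section Analytic

variable {𝕜 H E F : Type*} [NontriviallyNormedField 𝕜] [NormedAddCommGroup H] [NormedSpace 𝕜 H]
  [NormedAddCommGroup E] [NormedSpace 𝕜 E] [NormedAddCommGroup F] [NormedSpace 𝕜 F] {s₀ : H}

theorem AnalyticAt.clm_apply {Φ : H → E →L[𝕜] F} {g : H → E} (hΦ : AnalyticAt 𝕜 Φ s₀)
    (hg : AnalyticAt 𝕜 g s₀) : AnalyticAt 𝕜 (fun s => Φ s (g s)) s₀ :=
  ((ContinuousLinearMap.id 𝕜 (E →L[𝕜] F)).analyticAt_bilinear (Φ s₀, g s₀)).comp₂ hΦ hg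

theorem AnalyticAt.clm_comp {G : Type*} [NormedAddCommGroup G] [NormedSpace 𝕜 G]
    {Φ : H → F →L[𝕜] G} {Ψ : H → E →L[𝕜] F} (hΦ : AnalyticAt 𝕜 Φ s₀)
    (hΨ : AnalyticAt 𝕜 Ψ s₀) : AnalyticAt 𝕜 (fun s => Φ s ∘L Ψ s) s₀ :=
  ((ContinuousLinearMap.compL 𝕜 E F G).analyticAt_bilinear (Φ s₀, Ψ s₀)).comp₂ hΦ hΨ

theorem AnalyticAt.clm_prod {G : Type*} [NormedAddCommGroup G] [NormedSpace 𝕜 G]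
    {Φ : H → E →L[𝕜] F} {Ψ : H → E →L[𝕜] G} (hΦ : AnalyticAt 𝕜 Φ s₀)
    (hΨ : AnalyticAt 𝕜 Ψ s₀) : AnalyticAt 𝕜 (fun s => (Φ s).prod (Ψ s)) s₀ :=
  ((ContinuousLinearMap.prodL 𝕜 : _ ≃L[𝕜] E →L[𝕜] F × G).toContinuousLinearMap.analyticAt _).comp
    (hΦ.prod hΨ)

theorem exists_eventually_analyticAt_leftInverse [CompleteSpace E] {L : H → E →L[𝕜] F}
    (hL : ∀ᶠ s in 𝓝 s₀, AnalyticAt 𝕜 L s) (h₀ : (L s₀).HasLeftInverse) :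
    ∃ R : H → F →L[𝕜] E, ∀ᶠ s in 𝓝 s₀, AnalyticAt 𝕜 R s ∧ LeftInverse (R s) (L s) := by
  obtain ⟨S, hS⟩ := h₀
  set V : H → E →L[𝕜] E := fun s => S ∘L L s
  have hV : ∀ᶠ s in 𝓝 s₀, AnalyticAt 𝕜 V s := hL.mono fun s hs => analyticAt_const.clm_comp hs
  have hV₀ : V s₀ = 1 := ContinuousLinearMap.ext hS
  have hunit : ∀ᶠ s in 𝓝 s₀, IsUnit (V s) :=
    hV.self_of_nhds.continuousAt.eventually_mem (hV₀ ▸ Units.isOpen.mem_nhds isUnit_one)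
  refine ⟨fun s => Ring.inverse (V s) ∘L S, (hV.and hunit).mono fun s ⟨hVs, hus⟩ => ⟨?_, ?_⟩⟩
  · have hinv : AnalyticAt 𝕜 Ring.inverse (V s) := by
      simpa using analyticAt_inverse (𝕜 := 𝕜) hus.unit
    exact (hinv.comp hVs).clm_comp analyticAt_const
  · intro v
    have := congrArg (fun U : E →L[𝕜] E => U v) (Ring.inverse_mul_cancel _ hus)
    simpa [V] using this

end Analytic

theorem ContinuousLinearMap.hasLeftInverse_of_isCompl_range {𝕜 E F : Type*}
    [NontriviallyNormedField 𝕜] [NormedAddCommGroup E] [NormedSpace 𝕜 E] [CompleteSpace E]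
    [NormedAddCommGroup F] [NormedSpace 𝕜 F] [CompleteSpace F]
    (f : E →L[𝕜] F) {G : Submodule 𝕜 F} (h : IsCompl f.range G) [CompleteSpace G]
    (hker : f.ker = ⊥) : f.HasLeftInverse :=
  ((f.coprodSubtypeLEquivOfIsCompl h hker).hasLeftInverse.comp HasLeftInverse.inl).congr
    (by ext; simp [coprodSubtypeLEquivOfIsCompl])

namespace IsCompactOperator

variable {𝕜 X : Type*} [NontriviallyNormedField 𝕜] [NormedAddCommGroup X] [NormedSpace 𝕜 X]
  {T : X →L[𝕜] X}

theorem finiteDimensional_ker_one_sub [CompleteSpace 𝕜] (hT : IsCompactOperator T) :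
    FiniteDimensional 𝕜 (1 - T).ker := by
  have hfix : ∀ v ∈ (1 - T).ker, T v = v := fun v hv => (sub_eq_zero.1 hv).symm
  have hmaps : ∀ v ∈ (1 - T).ker, T v ∈ (1 - T).ker := fun v hv => (hfix v hv).symm ▸ hv
  have hid : (T : X →ₗ[𝕜] X).restrict hmaps = LinearMap.id :=
    LinearMap.ext fun v => Subtype.ext (hfix v v.2)
  have hK := hT.restrict hmaps (1 - T).isClosed_ker
  rw [hid, LinearMap.id_coe] at hK
  exact .of_isCompactOperator_id hK

theorem surjective_one_sub_of_injective [CompleteSpace X] (hT : IsCompactOperator T)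
    (h : Injective (1 - T : X →L[𝕜] X)) : Surjective (1 - T : X →L[𝕜] X) := by
  rcases hT.hasEigenvalue_or_mem_resolventSet one_ne_zero with hev | hres
  · obtain ⟨v, hv⟩ := hev.exists_hasEigenvector
    exact absurd (h (a₂ := 0) (by simpa [sub_eq_zero] using hv.apply_eq_smul.symm)) hv.2
  · rw [spectrum.mem_resolventSet_iff, Algebra.algebraMap_eq_smul_one, one_smul,
      ContinuousLinearMap.isUnit_iff_bijective] at hres
    exact hres.2

section RCLike

variable {𝕜 X : Type*} [RCLike 𝕜] [NormedAddCommGroup X] [NormedSpace 𝕜 X] [CompleteSpace X]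
  {T : X →L[𝕜] X}

theorem finiteDimensional_quotient_range_one_sub (hT : IsCompactOperator T) :
    FiniteDimensional 𝕜 (X ⧸ (1 - T).range) := by
  set R := (1 - T).range
  have := hT.finiteDimensional_ker_one_sub
  obtain ⟨π, hπ⟩ := Submodule.ClosedComplemented.of_finiteDimensional (1 - T).ker
  -- Otherwise the kernel embeds into the cokernel, which makes `1 - T + J ∘ π` injective for a
  -- finite-rank `J`; the Fredholm alternative then forces the cokernel to be the image of `J`.
  by_contra hinf
  obtain ⟨J₀, hJ₀⟩ : ∃ J₀ : (1 - T).ker →ₗ[𝕜] X ⧸ R, Injective J₀ := by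
    rw [← rank_le_iff_exists_linearMap]
    exact (Module.rank_lt_aleph0_iff.2 inferInstance).le.trans
      (not_lt.1 (mt Module.rank_lt_aleph0_iff.1 hinf))
  obtain ⟨σ, hσ⟩ := R.mkQ.exists_rightInverse_of_surjective R.range_mkQ
  let J : (1 - T).ker →L[𝕜] X := LinearMap.toContinuousLinearMap (σ ∘ₗ J₀)
  have hJ (z) : R.mkQ (J z) = J₀ z := LinearMap.congr_fun hσ (J₀ z)
  have hsplit (v) : (1 - (T + -J ∘L π) : X →L[𝕜] X) v = (1 - T) v + J (π v) := by
    simp only [sub_apply, add_apply, neg_apply, ContinuousLinearMap.comp_apply]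
    abel
  have hmkQ (v) : R.mkQ ((1 - (T + -J ∘L π) : X →L[𝕜] X) v) = J₀ (π v) := by
    have hR : R.mkQ ((1 - T) v) = 0 := (Submodule.Quotient.mk_eq_zero R).2 ⟨v, rfl⟩
    rw [hsplit, map_add, hJ, hR, zero_add]
  have hF : IsCompactOperator (-J ∘L π) :=
    (isCompactOperator_of_locallyCompactSpace_dom π).clm_comp (-J)
  have hinj : Injective (1 - (T + -J ∘L π) : X →L[𝕜] X) := by
    rw [injective_iff_map_eq_zero]
    intro v hv
    have hπv : π v = 0 := hJ₀ (by rw [← hmkQ, hv, map_zero, map_zero])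
    have hvker : (1 - T) v = 0 := by
      have h := hsplit v
      rwa [hv, hπv, map_zero, add_zero, eq_comm] at h
    exact congrArg Subtype.val ((hπ ⟨v, hvker⟩).symm.trans hπv)
  have hsurj := (hT.add hF).surjective_one_sub_of_injective hinj
  refine hinf (Module.Finite.of_surjective J₀ fun q => ?_)
  obtain ⟨w, rfl⟩ := R.mkQ_surjective q
  obtain ⟨v, rfl⟩ := hsurj w
  exact ⟨π v, (hmkQ v).symm⟩

theorem hasLeftInverse_prod_one_sub (hT : IsCompactOperator T) (π : X →L[𝕜] (1 - T).ker)
    (hπ : ∀ z : (1 - T).ker, π z = z) : ((1 - T).prod π).HasLeftInverse := by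
  have := hT.finiteDimensional_quotient_range_one_sub
  obtain ⟨Y, hY⟩ := (1 - T).range.exists_isCompl
  have : FiniteDimensional 𝕜 Y := ((1 - T).range.quotientEquivOfIsCompl Y hY).finiteDimensional
  have : CompleteSpace (Y.prod (⊥ : Submodule 𝕜 (1 - T).ker)) := by
    have hclosed : IsClosed ((Y.prod (⊥ : Submodule 𝕜 (1 - T).ker)) : Set (X × (1 - T).ker)) := by
      rw [Submodule.prod_coe, Submodule.bot_coe]
      exact Y.closed_of_finiteDimensional.prod isClosed_singleton
    exact hclosed.completeSpace_coe
  have hker (x : (1 - T).ker) : (1 - T) (x : X) = 0 := x.2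
  -- `Y × 0` complements the range of `v ↦ ((1 - T) v, π v)`.
  refine ((1 - T).prod π).hasLeftInverse_of_isCompl_range (G := Y.prod ⊥) ⟨?_, ?_⟩ ?_
  · rw [Submodule.disjoint_def]
    rintro _ ⟨v, rfl⟩ hv
    obtain ⟨hvY, hvbot⟩ := Submodule.mem_prod.1 hv
    exact Prod.ext (Submodule.disjoint_def.1 hY.disjoint _ ⟨v, rfl⟩ hvY)
      ((Submodule.mem_bot 𝕜).1 hvbot)
  · rw [codisjoint_iff, Submodule.eq_top_iff']
    rintro ⟨w, z⟩
    obtain ⟨_, ⟨u, rfl⟩, y, hy, rfl⟩ :=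
      Submodule.mem_sup.1 (hY.sup_eq_top ▸ Submodule.mem_top (x := w))
    have hL : (1 - T).prod π (u - π u + z) = ((1 - T) u, z) := by
      rw [ContinuousLinearMap.prod_apply, map_add, map_sub, hker, hker, map_add, map_sub, hπ, hπ,
        sub_zero, add_zero, sub_self, zero_add]
    exact Submodule.mem_sup.2 ⟨_, ⟨_, hL⟩, (y, 0), Submodule.mem_prod.2 ⟨hy, zero_mem _⟩,
      by rw [Prod.mk_add_mk, add_zero]; rfl⟩
  · rw [LinearMap.ker_eq_bot']
    intro v hv
    have hv' := Prod.ext_iff.1 hv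
    exact congrArg Subtype.val ((hπ ⟨v, hv'.1⟩).symm.trans hv'.2)

end RCLike

end IsCompactOperator

theorem ker_subset_span_of_leftInverse {𝕜 B C Z : Type*} [NontriviallyNormedField 𝕜]
    [NormedAddCommGroup B] [NormedSpace 𝕜 B] [NormedAddCommGroup C] [NormedSpace 𝕜 C]
    [NormedAddCommGroup Z] [NormedSpace 𝕜 Z] {B₁ : Submodule 𝕜 B}
    (μ : B →L[𝕜] C) (D : C →L[𝕜] B₁) (π : B₁ →L[𝕜] Z) (R : B₁ × Z →L[𝕜] B₁)
    (hR : LeftInverse R ((D ∘L μ ∘L B₁.subtypeL).prod π))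
    (p₁ p₂ : B → B) (hp₁ : ∀ x, p₁ x ∈ B₁) (hsum : ∀ x, p₁ x + p₂ x = x)
    {ι κ : Type*} (g : ι → B) (hg : ∀ x, μ x = 0 → p₂ x ∈ Submodule.span 𝕜 (range g))
    (b : κ → Z) (hb : Submodule.span 𝕜 (range b) = ⊤) :
    {x | μ x = 0} ⊆ Submodule.span 𝕜 (range (Sum.elim g
      (Sum.elim (fun j => (R (D (μ (g j)), 0) : B)) (fun i => (R (0, b i) : B))))) := by
  intro x hx
  set v : B₁ := ⟨p₁ x, hp₁ x⟩
  have hLv : (D ∘L μ ∘L B₁.subtypeL).prod π v = (-D (μ (p₂ x)), 0) + (0, π v) := by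
    have hμv : μ (p₁ x) = -μ (p₂ x) := by
      rw [eq_sub_of_add_eq (hsum x), map_sub, (hx : μ x = 0), zero_sub]
    ext1 <;> simp [v, hμv]
  have hx' : x = p₂ x - (R (D (μ (p₂ x)), 0) : B) + (R (0, π v) : B) := by
    have hv := congrArg Subtype.val (hR v)
    rw [hLv, map_add, Submodule.coe_add, ← neg_zero, ← Prod.neg_mk, map_neg,
      Submodule.coe_neg] at hv
    calc x = p₁ x + p₂ x := (hsum x).symm
      _ = _ := by rw [show p₁ x = _ from hv.symm]; abel
  let Φ : B →L[𝕜] B := B₁.subtypeL ∘L R ∘L .inl 𝕜 B₁ Z ∘L D ∘L μ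
  let Θ : Z →L[𝕜] B := B₁.subtypeL ∘L R ∘L .inr 𝕜 B₁ Z
  have hΦ := Submodule.apply_mem_span_image_of_mem_span (Φ : B →ₗ[𝕜] B) (hg x hx)
  have hΘ := Submodule.apply_mem_span_image_of_mem_span (Θ : Z →ₗ[𝕜] B)
    (hb ▸ Submodule.mem_top (x := π v))
  rw [hx']
  refine add_mem (sub_mem (Submodule.span_mono ?_ (hg x hx)) (Submodule.span_mono ?_ hΦ))
    (Submodule.span_mono ?_ hΘ)
  · rintro _ ⟨j, rfl⟩
    exact ⟨Sum.inl j, rfl⟩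
  · rintro _ ⟨_, ⟨j, rfl⟩, rfl⟩
    exact ⟨Sum.inr (Sum.inl j), rfl⟩
  · rintro _ ⟨_, ⟨i, rfl⟩, rfl⟩
    exact ⟨Sum.inr (Sum.inr i), rfl⟩

theorem exists_fin_analyticOnNhd_span {𝕜 H E ι : Type*} [NontriviallyNormedField 𝕜]
    [NormedAddCommGroup H] [NormedSpace 𝕜 H] [NormedAddCommGroup E] [NormedSpace 𝕜 E]
    [Fintype ι] {W : Set H} {Φ : H → Set E} (e : ι → H → E)
    (he : ∀ i, AnalyticOnNhd 𝕜 (e i) W)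
    (hΦ : ∀ s ∈ W, Φ s ⊆ Submodule.span 𝕜 (range fun i => e i s)) :
    ∃ (k : ℕ) (e' : Fin k → H → E), (∀ j, AnalyticOnNhd 𝕜 (e' j) W) ∧
      ∀ s ∈ W, Φ s ⊆ Submodule.span 𝕜 (range fun j => e' j s) :=
  ⟨_, fun j => e ((Fintype.equivFin ι).symm j), fun j => he _, fun s hs => by
    have := (Fintype.equivFin ι).symm.surjective.range_comp (fun i => e i s)
    exact this ▸ hΦ s hs⟩

theorem stmt_2_general {N : ℕ} {M : Set (Fin N → ℂ)} (hM : IsOpen M)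
    {B C : Type*} [NormedAddCommGroup B] [NormedSpace ℂ B] [CompleteSpace B]
    [NormedAddCommGroup C] [NormedSpace ℂ C]
    (μ : (Fin N → ℂ) → (B →L[ℂ] C)) (hμ : AnalyticOnNhd ℂ μ M)
    (s₀ : Fin N → ℂ) (hs₀ : s₀ ∈ M)
    -- `B = B₁ ⊕ B₂`, a topological direct sum of closed subspaces, with continuous
    -- linear projections `p₁`, `p₂`
    (B₁ B₂ : Submodule ℂ B) (hB₁ : IsClosed (B₁ : Set B))
    (p₁ p₂ : B →L[ℂ] B)
    (hp₁ : ∀ x : B, p₁ x ∈ B₁)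
    (hsum : ∀ x : B, p₁ x + p₂ x = x)
    -- (a) the restriction of `μ s₀` to `B₁` is left-invertible modulo compact operators
    (D : C →L[ℂ] B₁) (K : B₁ →L[ℂ] B₁) (hK : IsCompactOperator K)
    (hDK : ∀ v : B₁, D (μ s₀ (v : B)) = v - K v)
    -- (b) the family `p₂ (ker μ s)` is locally of finite type at `s₀`
    (m : ℕ) (W₀ : Set (Fin N → ℂ)) (hW₀ : IsOpen W₀) (hs₀W₀ : s₀ ∈ W₀)
    (f : Fin m → (Fin N → ℂ) → B₂)
    (hf : ∀ j, AnalyticOnNhd ℂ (f j) W₀)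
    (hker2 : ∀ s ∈ W₀, ∀ x : B, μ s x = 0 →
      p₂ x ∈ (Submodule.span ℂ (Set.range fun j => ((f j s : B))) : Set B)) :
    ∃ W : Set (Fin N → ℂ), IsOpen W ∧ s₀ ∈ W ∧ W ⊆ M ∧
      ∃ (k : ℕ) (e : Fin k → (Fin N → ℂ) → B),
        (∀ j, AnalyticOnNhd ℂ (e j) W) ∧
        ∀ s ∈ W, {x : B | μ s x = 0} ⊆
          (Submodule.span ℂ (Set.range fun j => e j s) : Set B) := by
  have : CompleteSpace B₁ := hB₁.completeSpace_coe
  have := hK.finiteDimensional_ker_one_sub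
  obtain ⟨π, hπ⟩ := Submodule.ClosedComplemented.of_finiteDimensional (1 - K).ker
  let L : (Fin N → ℂ) → B₁ →L[ℂ] B₁ × (1 - K).ker := fun s => (D ∘L μ s ∘L B₁.subtypeL).prod π
  have hL₀ : (L s₀).HasLeftInverse := by
    have hA₀ : D ∘L μ s₀ ∘L B₁.subtypeL = 1 - K := ContinuousLinearMap.ext fun v => hDK v
    exact (congrArg (·.prod π) hA₀ : L s₀ = _) ▸ hK.hasLeftInverse_prod_one_sub π hπ
  have hμ' : ∀ᶠ s in 𝓝 s₀, s ∈ M ∧ AnalyticAt ℂ μ s :=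
    mem_of_superset (hM.mem_nhds hs₀) fun s hs => ⟨hs, hμ s hs⟩
  have hL : ∀ᶠ s in 𝓝 s₀, AnalyticAt ℂ L s := hμ'.mono fun s hs =>
    (analyticAt_const.clm_comp (hs.2.clm_comp analyticAt_const)).clm_prod analyticAt_const
  obtain ⟨R, hR⟩ := exists_eventually_analyticAt_leftInverse hL hL₀
  obtain ⟨W, hW, hWopen, hs₀W⟩ := eventually_nhds_iff.1 (hR.and (hμ'.and (hW₀.mem_nhds hs₀W₀)))
  refine ⟨W, hWopen, hs₀W, fun s hs => (hW s hs).2.1.1, ?_⟩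
  let b := Module.finBasis ℂ (1 - K).ker
  refine exists_fin_analyticOnNhd_span (fun i s => Sum.elim (fun j => (f j s : B))
      (Sum.elim (fun j => (R s (D (μ s (f j s)), 0) : B)) (fun i => (R s (0, b i) : B))) i) ?_
    fun s hs => ker_subset_span_of_leftInverse (μ s) D π (R s) (hW s hs).1.2 p₁ p₂ hp₁ hsum _
      (hker2 s (hW s hs).2.2) b b.span_eq
  rintro (j | j | i) s hs <;> obtain ⟨⟨hRs, -⟩, ⟨-, hμs⟩, hsW₀⟩ := hW s hs
  · exact (B₂.subtypeL.analyticAt _).comp (hf j s hsW₀)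
  · exact (B₁.subtypeL.analyticAt _).comp (hRs.clm_apply (((D.analyticAt _).comp
      (hμs.clm_apply ((B₂.subtypeL.analyticAt _).comp (hf j s hsW₀)))).prod analyticAt_const))
  · exact (B₁.subtypeL.analyticAt _).comp (hRs.clm_apply analyticAt_const)

/-- **Fredholm's criterion.** Suppose `B = B₁ ⊕ B₂` is a topological direct sum of closed
subspaces, the restriction of `μ s₀` to `B₁` is left-invertible modulo compact operators,
and `p₂ (ker μ s)` is locally of finite type at `s₀`. Then `ker μ s` is locally of finite
type at `s₀`. -/
theorem stmt_2 {N : ℕ} {M : Set (Fin N → ℂ)} (hM : IsOpen M)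
    {B C : Type*} [NormedAddCommGroup B] [NormedSpace ℂ B] [CompleteSpace B]
    [NormedAddCommGroup C] [NormedSpace ℂ C] [CompleteSpace C]
    (μ : (Fin N → ℂ) → (B →L[ℂ] C)) (hμ : AnalyticOnNhd ℂ μ M)
    (s₀ : Fin N → ℂ) (hs₀ : s₀ ∈ M)
    -- `B = B₁ ⊕ B₂`, a topological direct sum of closed subspaces, with continuous
    -- linear projections `p₁`, `p₂`
    (B₁ B₂ : Submodule ℂ B) (hB₁ : IsClosed (B₁ : Set B)) (hB₂ : IsClosed (B₂ : Set B))
    (hcompl : IsCompl B₁ B₂)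
    (p₁ p₂ : B →L[ℂ] B)
    (hp₁ : ∀ x : B, p₁ x ∈ B₁) (hp₂ : ∀ x : B, p₂ x ∈ B₂)
    (hp₁eq : ∀ x ∈ B₁, p₁ x = x) (hp₂eq : ∀ x ∈ B₂, p₂ x = x)
    (hsum : ∀ x : B, p₁ x + p₂ x = x)
    -- (a) the restriction of `μ s₀` to `B₁` is left-invertible modulo compact operators
    (D : C →L[ℂ] B₁) (K : B₁ →L[ℂ] B₁) (hK : IsCompactOperator K)
    (hDK : ∀ v : B₁, D (μ s₀ (v : B)) = v - K v)
    -- (b) the family `p₂ (ker μ s)` is locally of finite type at `s₀`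
    (m : ℕ) (W₀ : Set (Fin N → ℂ)) (hW₀ : IsOpen W₀) (hs₀W₀ : s₀ ∈ W₀) (hW₀M : W₀ ⊆ M)
    (f : Fin m → (Fin N → ℂ) → B₂)
    (hf : ∀ j, AnalyticOnNhd ℂ (f j) W₀)
    (hker2 : ∀ s ∈ W₀, ∀ x : B, μ s x = 0 →
      p₂ x ∈ (Submodule.span ℂ (Set.range fun j => ((f j s : B))) : Set B)) :
    ∃ W : Set (Fin N → ℂ), IsOpen W ∧ s₀ ∈ W ∧ W ⊆ M ∧
      ∃ (k : ℕ) (e : Fin k → (Fin N → ℂ) → B),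
        (∀ j, AnalyticOnNhd ℂ (e j) W) ∧
        ∀ s ∈ W, {x : B | μ s x = 0} ⊆
          (Submodule.span ℂ (Set.range fun j => e j s) : Set B) :=
  stmt_2_general hM μ hμ s₀ hs₀ B₁ B₂ hB₁ p₁ p₂ hp₁ hsum D K hK hDK m W₀ hW₀ hs₀W₀ f hf hker2
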